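/- Let X and Y be real normed spaces, α, β ∈ [0,1) with 0 < α+β < 1, and T : X → Y a nonzero bounded linear operator satisfying ‖Tu‖ = ‖T‖·‖u‖ for all u ∈ X. Then ρ_{α,β}(Tu, Tv) = ‖T‖² ρ_{α,β}(u,v) for all u, v ∈ X; in particular T preserves ρ_{α,β}-orthogonality. -/

import Mathlib

noncomputable def rhoP {X : Type*} [NormedAddCommGroup X] [NormedSpace ℝ X] (u v : X) : ℝ :=
  Filter.limUnder (nhdsWithin (0:ℝ) (Set.Ioi 0)) (fun t : ℝ => (‖u + t • v‖^2 - ‖u‖^2) / (2*t))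

noncomputable def rhoM {X : Type*} [NormedAddCommGroup X] [NormedSpace ℝ X] (u v : X) : ℝ :=
  Filter.limUnder (nhdsWithin (0:ℝ) (Set.Iio 0)) (fun t : ℝ => (‖u + t • v‖^2 - ‖u‖^2) / (2*t))

noncomputable def rhoAB {X : Type*} [NormedAddCommGroup X] [NormedSpace ℝ X]
    (α β : ℝ) (u v : X) : ℝ := α * rhoM u v + β * rhoP u v

/-
The function `t ↦ ‖u + t • v‖ ^ 2` is convex, so its one-sided difference quotients at `0`
converge; this matters because `limUnder` is a junk value otherwise. A linear map with
`‖T w‖ = c * ‖w‖` multiplies every difference quotient of `(u, v)` by `c ^ 2`, hence also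
both one-sided limits and every combination `ρ_{α,β}`.
-/

section

open Filter Topology Set

theorem ConvexOn.tendsto_slope_nhdsGT {S : Set ℝ} {f : ℝ → ℝ} {x : ℝ} (hf : ConvexOn ℝ S f)
    (hx : x ∈ interior S) :
    Tendsto (slope f x) (𝓝[>] x) (𝓝 (derivWithin f (Ioi x) x)) :=
  (hasDerivWithinAt_iff_tendsto_slope' self_notMem_Ioi).1 <|
    hf.hasDerivWithinAt_rightDeriv_of_mem_interior hx

theorem ConvexOn.tendsto_slope_nhdsLT {S : Set ℝ} {f : ℝ → ℝ} {x : ℝ} (hf : ConvexOn ℝ S f)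
    (hx : x ∈ interior S) :
    Tendsto (slope f x) (𝓝[<] x) (𝓝 (derivWithin f (Iio x) x)) :=
  (hasDerivWithinAt_iff_tendsto_slope' self_notMem_Iio).1 <|
    hf.hasDerivWithinAt_leftDeriv_of_mem_interior hx

variable {X : Type*} [NormedAddCommGroup X] [NormedSpace ℝ X]

theorem convexOn_norm_add_smul_sq (u v : X) :
    ConvexOn ℝ univ (fun t : ℝ => ‖u + t • v‖ ^ 2) := by
  have h := ((convexOn_univ_norm (E := X)).pow (fun _ _ => norm_nonneg _) 2).translate_right u
    |>.comp_linearMap (LinearMap.toSpanSingleton ℝ X v)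
  simpa [Function.comp_def] using h

theorem norm_add_smul_sq_sub_div_eq_slope (u v : X) :
    (fun t : ℝ => (‖u + t • v‖ ^ 2 - ‖u‖ ^ 2) / (2 * t)) =
      fun t => slope (fun t : ℝ => ‖u + t • v‖ ^ 2) 0 t / 2 := by
  funext t
  simp only [slope_def_field, zero_smul, add_zero, sub_zero]
  ring

theorem tendsto_rhoP (u v : X) :
    Tendsto (fun t : ℝ => (‖u + t • v‖ ^ 2 - ‖u‖ ^ 2) / (2 * t)) (𝓝[>] 0) (𝓝 (rhoP u v)) := by
  have h := ((convexOn_norm_add_smul_sq u v).tendsto_slope_nhdsGT (x := 0) (by simp)).div_const 2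
  rw [← norm_add_smul_sq_sub_div_eq_slope] at h
  exact tendsto_nhds_limUnder ⟨_, h⟩

theorem tendsto_rhoM (u v : X) :
    Tendsto (fun t : ℝ => (‖u + t • v‖ ^ 2 - ‖u‖ ^ 2) / (2 * t)) (𝓝[<] 0) (𝓝 (rhoM u v)) := by
  have h := ((convexOn_norm_add_smul_sq u v).tendsto_slope_nhdsLT (x := 0) (by simp)).div_const 2
  rw [← norm_add_smul_sq_sub_div_eq_slope] at h
  exact tendsto_nhds_limUnder ⟨_, h⟩

section map

variable {Y : Type*} [NormedAddCommGroup Y] [NormedSpace ℝ Y]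
  {T : X →ₗ[ℝ] Y} {c : ℝ}

theorem norm_map_add_smul_sq_sub_div_eq_sq_mul (hT : ∀ u, ‖T u‖ = c * ‖u‖) (u v : X) :
    (fun t : ℝ => (‖T u + t • T v‖ ^ 2 - ‖T u‖ ^ 2) / (2 * t)) =
      fun t => c ^ 2 * ((‖u + t • v‖ ^ 2 - ‖u‖ ^ 2) / (2 * t)) := by
  funext t
  rw [← T.map_smul, ← T.map_add, hT, hT]
  ring

theorem rhoP_map (hT : ∀ u, ‖T u‖ = c * ‖u‖) (u v : X) :
    rhoP (T u) (T v) = c ^ 2 * rhoP u v := by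
  refine Tendsto.limUnder_eq ?_
  rw [norm_map_add_smul_sq_sub_div_eq_sq_mul hT]
  exact (tendsto_rhoP u v).const_mul _

theorem rhoM_map (hT : ∀ u, ‖T u‖ = c * ‖u‖) (u v : X) :
    rhoM (T u) (T v) = c ^ 2 * rhoM u v := by
  refine Tendsto.limUnder_eq ?_
  rw [norm_map_add_smul_sq_sub_div_eq_sq_mul hT]
  exact (tendsto_rhoM u v).const_mul _

theorem rhoAB_map (hT : ∀ u, ‖T u‖ = c * ‖u‖) (α β : ℝ) (u v : X) :
    rhoAB α β (T u) (T v) = c ^ 2 * rhoAB α β u v := by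
  rw [rhoAB, rhoAB, rhoP_map hT, rhoM_map hT]
  ring

end map

end

theorem stmt_14_general {X Y : Type*} [NormedAddCommGroup X] [NormedSpace ℝ X]
    [NormedAddCommGroup Y] [NormedSpace ℝ Y]
    (α β : ℝ)
    (T : X →L[ℝ] Y) (hiso : ∀ u : X, ‖T u‖ = ‖T‖ * ‖u‖) :
    (∀ u v : X, rhoAB α β (T u) (T v) = ‖T‖^2 * rhoAB α β u v) ∧
    (∀ u v : X, rhoAB α β u v = 0 → rhoAB α β (T u) (T v) = 0) := by
  have hscale : ∀ u v : X, rhoAB α β (T u) (T v) = ‖T‖ ^ 2 * rhoAB α β u v :=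
    rhoAB_map (T := (T : X →ₗ[ℝ] Y)) hiso α β
  exact ⟨hscale, fun u v h => by rw [hscale, h, mul_zero]⟩

theorem stmt_14 {X Y : Type*} [NormedAddCommGroup X] [NormedSpace ℝ X]
    [NormedAddCommGroup Y] [NormedSpace ℝ Y]
    (α β : ℝ) (hα : α ∈ Set.Ico (0:ℝ) 1) (hβ : β ∈ Set.Ico (0:ℝ) 1)
    (hab : 0 < α + β) (hab1 : α + β < 1)
    (T : X →L[ℝ] Y) (hT : T ≠ 0) (hiso : ∀ u : X, ‖T u‖ = ‖T‖ * ‖u‖) :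
    (∀ u v : X, rhoAB α β (T u) (T v) = ‖T‖^2 * rhoAB α β u v) ∧
    (∀ u v : X, rhoAB α β u v = 0 → rhoAB α β (T u) (T v) = 0) :=
  stmt_14_general α β T hiso
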